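/- arXiv:1906.02046 — 4 statements merged into one kernel-verified Lean document; each statement's English description precedes it below -/
import Mathlib

section
/- Let N ≥ 1 and 1 ≤ p < ∞. Define f : T_N → ℓ_p(T_N) by f(s) = Σ_{u ≤ s} e_u, where the sum is over all initial segments u of s (including ∅ and s itself) and (e_u)_{u ∈ T_N} is the canonical basis. Then for all s, t ∈ T_N, d(s,t)^{1/p} ≤ ‖f(s) - f(t)‖_{ℓ_p} ≤ d(s,t), where d is the tree metric d(s,t) = |s| + |t| - 2|a_{s,t}|. -/
def commonPrefixLen : List ℕ → List ℕ → ℕ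
  | a :: s, b :: t => if a = b then commonPrefixLen s t + 1 else 0
  | _, _ => 0

def treeDist (s t : List ℕ) : ℕ :=
  (s.length - commonPrefixLen s t) + (t.length - commonPrefixLen s t)

lemma cpl_le_left : ∀ s t : List ℕ, commonPrefixLen s t ≤ s.length
  | [], _ => by simp [commonPrefixLen]
  | _ :: _, [] => by simp [commonPrefixLen]
  | a :: s, b :: t => by
    by_cases h : a = b <;>
      simp [commonPrefixLen, h, Nat.succ_le_succ, cpl_le_left s t]

lemma cpl_comm : ∀ s t : List ℕ, commonPrefixLen s t = commonPrefixLen t s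
  | [], [] => rfl
  | [], _ :: _ => rfl
  | _ :: _, [] => rfl
  | a :: s, b :: t => by
    by_cases h : a = b
    · simp [commonPrefixLen, h, cpl_comm s t]
    · simp [commonPrefixLen, h, Ne.symm h]

lemma cpl_key : ∀ (u s t : List ℕ), u <+: s →
    (u <+: t ↔ u.length ≤ commonPrefixLen s t)
  | [], s, t, _ => by simp
  | a :: u, [], t, h => by simp at h
  | a :: u, b :: s, [], h => by simp [commonPrefixLen]
  | a :: u, b :: s, c :: t, h => by
    rw [List.cons_prefix_cons] at h
    obtain ⟨rfl, hus⟩ := h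
    by_cases hac : a = c
    · subst hac
      simp [commonPrefixLen, List.cons_prefix_cons, cpl_key u s t hus,
        Nat.succ_le_succ_iff]
    · simp [commonPrefixLen, List.cons_prefix_cons, hac]

/-- If `f : T_N → ℓ_p(T_N)` is given by `f(s) = Σ_{u ≤ s} e_u` (i.e. `f(s)` is the
indicator function of the set of initial segments of `s`), then
`d(s,t)^{1/p} ≤ ‖f(s) - f(t)‖_p ≤ d(s,t)`. -/
theorem stmt_1 (N : ℕ) (hN : 1 ≤ N) (p : ℝ) (hp : 1 ≤ p)
    (f : {l : List ℕ // l.length ≤ N} →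
      lp (fun _ : {l : List ℕ // l.length ≤ N} => ℝ) (ENNReal.ofReal p))
    (hf : ∀ s u : {l : List ℕ // l.length ≤ N},
      (f s : ∀ _ : {l : List ℕ // l.length ≤ N}, ℝ) u = if u.1 <+: s.1 then 1 else 0) :
    ∀ s t : {l : List ℕ // l.length ≤ N},
      (treeDist s.1 t.1 : ℝ) ^ (1 / p) ≤ ‖f s - f t‖ ∧
      ‖f s - f t‖ ≤ (treeDist s.1 t.1 : ℝ) := by
  intro s t
  have hp0 : (0 : ℝ) < p := lt_of_lt_of_le one_pos hp
  have htr : (ENNReal.ofReal p).toReal = p := ENNReal.toReal_ofReal hp0.le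
  set k := commonPrefixLen s.1 t.1 with hk
  have hks : k ≤ s.1.length := cpl_le_left _ _
  have hkt : k ≤ t.1.length := by rw [hk, cpl_comm]; exact cpl_le_left _ _
  -- the map n ↦ w.take n into the tree
  have hmem : ∀ (w : {l : List ℕ // l.length ≤ N}) (n : ℕ),
      (w.1.take n).length ≤ N :=
    fun w n => le_trans (by rw [List.length_take]; exact min_le_right _ _) w.2
  set F : {l : List ℕ // l.length ≤ N} → ℕ → {l : List ℕ // l.length ≤ N} :=
    fun w n => ⟨w.1.take n, hmem w n⟩ with hF
  have hinj : ∀ (w : {l : List ℕ // l.length ≤ N}),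
      Set.InjOn (F w) (Finset.Ico (k + 1) (w.1.length + 1)) := by
    intro w n hn m hm hnm
    simp only [Finset.coe_Ico, Set.mem_Ico, Nat.lt_succ_iff] at hn hm
    have : (w.1.take n).length = (w.1.take m).length := by
      rw [show w.1.take n = w.1.take m from congrArg Subtype.val hnm]
    rwa [List.length_take, List.length_take, min_eq_left hn.2,
      min_eq_left hm.2] at this
  set A1 : Finset {l : List ℕ // l.length ≤ N} :=
    (Finset.Ico (k + 1) (s.1.length + 1)).image (F s) with hA1
  set A2 : Finset {l : List ℕ // l.length ≤ N} :=
    (Finset.Ico (k + 1) (t.1.length + 1)).image (F t) with hA2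
  -- membership characterizations
  have hchar : ∀ (w : {l : List ℕ // l.length ≤ N}) (other : List ℕ),
      k = commonPrefixLen w.1 other →
      ∀ u, (u ∈ (Finset.Ico (k + 1) (w.1.length + 1)).image (F w)) ↔
        (u.1 <+: w.1 ∧ ¬ u.1 <+: other) := by
    intro w other hko u
    constructor
    · intro hu
      obtain ⟨n, hn, rfl⟩ := Finset.mem_image.mp hu
      simp only [Finset.mem_Ico, Nat.lt_succ_iff] at hn
      have hpre : (F w n).1 <+: w.1 := List.take_prefix _ _
      have hlen : (F w n).1.length = n := by
        simp only [hF, List.length_take, min_eq_left hn.2]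
      refine ⟨hpre, ?_⟩
      rw [cpl_key _ _ _ hpre, ← hko, hlen]
      omega
    · rintro ⟨hus, hut⟩
      rw [cpl_key _ _ _ hus, ← hko] at hut
      refine Finset.mem_image.mpr ⟨u.1.length, ?_, ?_⟩
      · simp only [Finset.mem_Ico, Nat.lt_succ_iff]
        exact ⟨by omega, hus.length_le⟩
      · apply Subtype.ext
        simp only [hF]
        exact (List.prefix_iff_eq_take.mp hus).symm
    -- done with characterization
  have h1 : ∀ u, u ∈ A1 ↔ (u.1 <+: s.1 ∧ ¬ u.1 <+: t.1) := hchar s t.1 rfl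
  have h2 : ∀ u, u ∈ A2 ↔ (u.1 <+: t.1 ∧ ¬ u.1 <+: s.1) :=
    hchar t s.1 (by rw [hk, cpl_comm])
  have hdisj : Disjoint A1 A2 := by
    rw [Finset.disjoint_left]
    intro u hu1 hu2
    exact ((h2 u).mp hu2).2 ((h1 u).mp hu1).1
  set A := A1 ∪ A2 with hA
  have hcard : A.card = treeDist s.1 t.1 := by
    rw [hA, Finset.card_union_of_disjoint hdisj, hA1, hA2,
      Finset.card_image_of_injOn (hinj s), Finset.card_image_of_injOn (hinj t),
      Nat.card_Ico, Nat.card_Ico, treeDist, ← hk]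
    omega
  -- pointwise values
  have hval : ∀ u, ‖((f s - f t : lp (fun _ : {l : List ℕ // l.length ≤ N} => ℝ)
        (ENNReal.ofReal p)) : ∀ _ : {l : List ℕ // l.length ≤ N}, ℝ) u‖ ^ p
      = if u ∈ A then (1 : ℝ) else 0 := by
    intro u
    rw [lp.coeFn_sub, Pi.sub_apply, hf s u, hf t u]
    have hmemA : u ∈ A ↔ ((u.1 <+: s.1 ∧ ¬ u.1 <+: t.1) ∨
        (u.1 <+: t.1 ∧ ¬ u.1 <+: s.1)) := by
      rw [hA, Finset.mem_union, h1, h2]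
    by_cases hs' : u.1 <+: s.1 <;> by_cases ht' : u.1 <+: t.1 <;>
      simp only [hs', ht', if_true, if_false, hmemA, true_and, false_and,
        not_true, not_false_iff, and_true, and_false, or_false, false_or,
        if_neg, sub_self, sub_zero, zero_sub] <;>
      simp [norm_neg, Real.zero_rpow (ne_of_gt hp0), Real.one_rpow]
  -- the norm computation
  have hnorm : ‖f s - f t‖ = (treeDist s.1 t.1 : ℝ) ^ (1 / p) := by
    rw [lp.norm_eq_tsum_rpow (by rw [htr]; exact hp0) (f s - f t), htr]
    congr 1
    rw [tsum_eq_sum (s := A) (fun u hu => by rw [hval u, if_neg hu])]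
    rw [Finset.sum_congr rfl (fun u hu => by rw [hval u, if_pos hu]),
      Finset.sum_const, nsmul_eq_mul, mul_one, hcard]
  rw [hnorm]
  constructor
  · exact le_refl _
  · rcases Nat.eq_zero_or_pos (treeDist s.1 t.1) with hd | hd
    · simp only [hd, Nat.cast_zero]
      rw [Real.zero_rpow (by positivity : 1 / p ≠ 0)]
    · have h1d : (1 : ℝ) ≤ (treeDist s.1 t.1 : ℝ) := by exact_mod_cast hd
      calc ((treeDist s.1 t.1 : ℝ)) ^ (1 / p)
          ≤ ((treeDist s.1 t.1 : ℝ)) ^ (1 : ℝ) :=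
            Real.rpow_le_rpow_of_exponent_le h1d (by rw [div_le_one hp0]; exact hp)
        _ = (treeDist s.1 t.1 : ℝ) := Real.rpow_one _
end

section
/- Let X be a Banach space, c ∈ (0,1), and let (x_n)_{n ≥ 1} be a normalized sequence in X such that for all k ≥ 1, all scalars a_1, …, a_k, and all indices k ≤ n_1 < ⋯ < n_k, one has ‖Σ_{i=1}^k a_i x_{n_i}‖ ≥ c Σ_{i=1}^k |a_i|. Then for every N ≥ 1 there exists a map f : T_N → X such that c·d(s,t) ≤ ‖f(s) - f(t)‖ ≤ d(s,t) for all s, t ∈ T_N. In particular, the family (T_N)_{N ≥ 1} equi-Lipschitz embeds into X. -/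
open Finset

theorem commonPrefixLen_le_length_left (s t : List ℕ) : commonPrefixLen s t ≤ s.length := by
  fun_induction commonPrefixLen s t <;> simp_all

theorem commonPrefixLen_le_length_right (s t : List ℕ) : commonPrefixLen s t ≤ t.length := by
  fun_induction commonPrefixLen s t <;> simp_all

theorem take_eq_take_of_le_commonPrefixLen (s t : List ℕ) {i : ℕ}
    (hi : i ≤ commonPrefixLen s t) :
    s.take i = t.take i := by
  fun_induction commonPrefixLen s t generalizing i with
  | case1 a s t ih =>
    cases i with
    | zero => rfl
    | succ i => simp [ih (by omega : i ≤ _)]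
  | case2 => simp_all
  | case3 => simp_all

theorem take_ne_take_of_commonPrefixLen_lt (s t : List ℕ) {m : ℕ} (hm : commonPrefixLen s t < m)
    (hs : m ≤ s.length) (ht : m ≤ t.length) : s.take m ≠ t.take m := by
  fun_induction commonPrefixLen s t generalizing m with
  | case1 a s t ih =>
    obtain ⟨m, rfl⟩ := Nat.exists_eq_add_one_of_ne_zero (by omega : m ≠ 0)
    simpa using ih (by omega) (by simpa using hs) (by simpa using ht)
  | case2 a s b t hab =>
    obtain ⟨m, rfl⟩ := Nat.exists_eq_add_one_of_ne_zero (by omega : m ≠ 0)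
    simp [hab]
  | case3 s t hnil =>
    rcases s with _ | ⟨a, s⟩
    · simp at hs; omega
    rcases t with _ | ⟨b, t⟩
    · simp at ht; omega
    exact (hnil a s b t rfl rfl).elim

theorem treeDist_le_length_add_length (s t : List ℕ) : treeDist s t ≤ s.length + t.length := by
  unfold treeDist; omega

theorem eq_of_take_succ_eq_take_succ {s t : List ℕ} {i j : ℕ} (hi : i < s.length)
    (hj : j < t.length) (h : s.take (i + 1) = t.take (j + 1)) : i = j := by
  have := congrArg List.length h
  simp only [List.length_take] at this
  omega

section PrefixCodes

variable (Φ : List ℕ → ℕ)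

def prefixCodes (s : List ℕ) (p : ℕ) : Finset ℕ :=
  (Ico p s.length).image fun i => Φ (s.take (i + 1))

variable {Φ}

theorem injOn_comp_take_succ (hΦ : Function.Injective Φ) (s : List ℕ) (p : ℕ) :
    Set.InjOn (fun i => Φ (s.take (i + 1))) (Ico p s.length) := by
  intro i hi j hj h
  simp only [coe_Ico, Set.mem_Ico] at hi hj
  exact eq_of_take_succ_eq_take_succ hi.2 hj.2 (hΦ h)

theorem card_prefixCodes (hΦ : Function.Injective Φ) (s : List ℕ) (p : ℕ) :
    #(prefixCodes Φ s p) = s.length - p := by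
  rw [prefixCodes, card_image_of_injOn (injOn_comp_take_succ hΦ s p), Nat.card_Ico]

theorem sum_prefixCodes (hΦ : Function.Injective Φ) {M : Type*} [AddCommMonoid M] (g : ℕ → M)
    (s : List ℕ) (p : ℕ) :
    ∑ n ∈ prefixCodes Φ s p, g n = ∑ i ∈ Ico p s.length, g (Φ (s.take (i + 1))) :=
  sum_image (injOn_comp_take_succ hΦ s p)

theorem disjoint_prefixCodes (hΦ : Function.Injective Φ) (s t : List ℕ) :
    Disjoint (prefixCodes Φ s (commonPrefixLen s t)) (prefixCodes Φ t (commonPrefixLen s t)) := by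
  simp only [prefixCodes, disjoint_left, mem_image, mem_Ico, not_exists, not_and]
  rintro _ ⟨i, hi, rfl⟩ j hj hij
  have htake := (hΦ hij).symm
  obtain rfl := eq_of_take_succ_eq_take_succ hi.2 hj.2 htake
  exact take_ne_take_of_commonPrefixLen_lt s t (by omega) hi.2 hj.2 htake

end PrefixCodes

def prefixSum {M : Type*} [AddCommMonoid M] (g : List ℕ → M) (s : List ℕ) : M :=
  ∑ i ∈ range s.length, g (s.take (i + 1))

theorem prefixSum_sub_prefixSum {M : Type*} [AddCommGroup M] (g : List ℕ → M) (s t : List ℕ) :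
    prefixSum g s - prefixSum g t =
      ∑ i ∈ Ico (commonPrefixLen s t) s.length, g (s.take (i + 1)) -
        ∑ i ∈ Ico (commonPrefixLen s t) t.length, g (t.take (i + 1)) := by
  have hcommon : ∑ i ∈ range (commonPrefixLen s t), g (s.take (i + 1)) =
      ∑ i ∈ range (commonPrefixLen s t), g (t.take (i + 1)) :=
    sum_congr rfl fun i hi => by
      rw [take_eq_take_of_le_commonPrefixLen s t (mem_range.mp hi)]
  rw [prefixSum, prefixSum,
    ← sum_range_add_sum_Ico _ (commonPrefixLen_le_length_left s t),
    ← sum_range_add_sum_Ico _ (commonPrefixLen_le_length_right s t), hcommon,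
    add_sub_add_left_eq_sub]

section LowerEstimate

variable {X : Type*} [NormedAddCommGroup X] [NormedSpace ℝ X]

def HasLowerEllOneEstimate (c : ℝ) (x : ℕ → X) : Prop :=
  ∀ k : ℕ, 1 ≤ k → ∀ a : Fin k → ℝ, ∀ n : Fin k → ℕ,
    StrictMono n → (∀ i, k ≤ n i) → ‖∑ i, a i • x (n i)‖ ≥ c * ∑ i, |a i|

variable {c : ℝ} {x : ℕ → X}

theorem HasLowerEllOneEstimate.le_norm_sum (hlow : HasLowerEllOneEstimate c x) {S : Finset ℕ}
    (hS : ∀ m ∈ S, #S ≤ m) (a : ℕ → ℝ) :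
    c * ∑ n ∈ S, |a n| ≤ ‖∑ n ∈ S, a n • x n‖ := by
  rcases S.eq_empty_or_nonempty with rfl | hne
  · simp
  let e := S.orderEmbOfFin rfl
  have := hlow #S (card_pos.mpr hne) (fun i => a (e i)) e e.strictMono
    fun i => hS _ (S.orderEmbOfFin_mem rfl i)
  rwa [← S.map_orderEmbOfFin_univ rfl, sum_map, sum_map]

theorem HasLowerEllOneEstimate.mul_card_le_norm_sum_sub_sum (hlow : HasLowerEllOneEstimate c x)
    {A B : Finset ℕ} (hAB : Disjoint A B) (hlarge : ∀ m ∈ A ∪ B, #A + #B ≤ m) :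
    c * ((#A + #B : ℕ) : ℝ) ≤ ‖∑ n ∈ A, x n - ∑ n ∈ B, x n‖ := by
  set a : ℕ → ℝ := fun n => if n ∈ A then 1 else -1
  have hsigned : ∑ n ∈ A ∪ B, a n • x n = ∑ n ∈ A, x n - ∑ n ∈ B, x n := by
    rw [sum_union hAB, sub_eq_add_neg, ← sum_neg_distrib]
    congr 1 <;> refine sum_congr rfl fun n hn => ?_
    · simp [a, hn]
    · simp [a, disjoint_right.mp hAB hn]
  have habs : ∑ n ∈ A ∪ B, |a n| = ((#A + #B : ℕ) : ℝ) := by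
    rw [← card_union_of_disjoint hAB, card_eq_sum_ones, Nat.cast_sum, Nat.cast_one]
    exact sum_congr rfl fun n _ => by by_cases h : n ∈ A <;> simp [a, h]
  rw [← hsigned, ← habs]
  exact hlow.le_norm_sum (card_union_of_disjoint hAB ▸ hlarge) a

end LowerEstimate

theorem norm_sum_sub_sum_le {X : Type*} [SeminormedAddCommGroup X] {x : ℕ → X}
    (hnorm : ∀ n, ‖x n‖ = 1) (A B : Finset ℕ) :
    ‖∑ n ∈ A, x n - ∑ n ∈ B, x n‖ ≤ ((#A + #B : ℕ) : ℝ) := by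
  have hA : ‖∑ n ∈ A, x n‖ ≤ #A := by
    simpa [hnorm] using norm_sum_le A x
  have hB : ‖∑ n ∈ B, x n‖ ≤ #B := by
    simpa [hnorm] using norm_sum_le B x
  push_cast
  exact (norm_sub_le _ _).trans (add_le_add hA hB)

theorem HasLowerEllOneEstimate.prefixSum_treeDist_bounds {X : Type*} [NormedAddCommGroup X]
    [NormedSpace ℝ X] {c : ℝ} {x : ℕ → X} (hnorm : ∀ n, ‖x n‖ = 1)
    (hlow : HasLowerEllOneEstimate c x) {N : ℕ} {Φ : List ℕ → ℕ}
    (hΦ : Function.Injective Φ) (hΦN : ∀ u, 2 * N ≤ Φ u) {s t : List ℕ}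
    (hs : s.length ≤ N) (ht : t.length ≤ N) :
    c * (treeDist s t : ℝ) ≤ ‖prefixSum (x ∘ Φ) s - prefixSum (x ∘ Φ) t‖ ∧
      ‖prefixSum (x ∘ Φ) s - prefixSum (x ∘ Φ) t‖ ≤ (treeDist s t : ℝ) := by
  set A := prefixCodes Φ s (commonPrefixLen s t)
  set B := prefixCodes Φ t (commonPrefixLen s t)
  have hdiff :
      prefixSum (x ∘ Φ) s - prefixSum (x ∘ Φ) t = ∑ n ∈ A, x n - ∑ n ∈ B, x n := by
    rw [prefixSum_sub_prefixSum, sum_prefixCodes hΦ, sum_prefixCodes hΦ]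
    rfl
  have hcard : #A + #B = treeDist s t := by
    rw [card_prefixCodes hΦ, card_prefixCodes hΦ, treeDist]
  have hlarge : ∀ m ∈ A ∪ B, #A + #B ≤ m := by
    intro m hm
    obtain ⟨u, rfl⟩ : ∃ u, Φ u = m := by
      simp only [A, B, prefixCodes, mem_union, mem_image] at hm
      rcases hm with ⟨i, -, hi⟩ | ⟨i, -, hi⟩ <;> exact ⟨_, hi⟩
    have := treeDist_le_length_add_length s t
    have := hΦN u
    omega
  rw [hdiff, ← hcard]
  exact ⟨hlow.mul_card_le_norm_sum_sub_sum (disjoint_prefixCodes hΦ s t) hlarge,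
    norm_sum_sub_sum_le hnorm A B⟩

theorem stmt_3_general {X : Type*} [NormedAddCommGroup X] [NormedSpace ℝ X]
    (c : ℝ)
    (x : ℕ → X) (hnorm : ∀ n, ‖x n‖ = 1)
    (hlow : ∀ k : ℕ, 1 ≤ k → ∀ a : Fin k → ℝ, ∀ n : Fin k → ℕ,
      StrictMono n → (∀ i, k ≤ n i) →
      ‖∑ i, a i • x (n i)‖ ≥ c * ∑ i, |a i|) :
    ∀ N : ℕ, 1 ≤ N → ∃ f : {l : List ℕ // l.length ≤ N} → X,
      ∀ s t : {l : List ℕ // l.length ≤ N},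
        c * (treeDist s.1 t.1 : ℝ) ≤ ‖f s - f t‖ ∧
        ‖f s - f t‖ ≤ (treeDist s.1 t.1 : ℝ) := by
  intro N _
  let Φ : List ℕ → ℕ := fun u => 2 * N + Encodable.encode u
  have hΦ : Function.Injective Φ := fun u v h =>
    Encodable.encode_injective (Nat.add_left_cancel h)
  exact ⟨fun s => prefixSum (x ∘ Φ) s.1, fun s t =>
    HasLowerEllOneEstimate.prefixSum_treeDist_bounds hnorm hlow hΦ
      (fun _ => Nat.le_add_right _ _) s.2 t.2⟩

/-- If a Banach space `X` contains a normalized sequence satisfying a lower `ℓ₁`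
estimate with constant `c` (over indices `k ≤ n₁ < ⋯ < n_k`), then each countably
branching tree `T_N` embeds into `X` with `c·d(s,t) ≤ ‖f(s) - f(t)‖ ≤ d(s,t)`;
in particular the family `(T_N)` equi-Lipschitz embeds into `X`. -/
theorem stmt_3 {X : Type*} [NormedAddCommGroup X] [NormedSpace ℝ X] [CompleteSpace X]
    (c : ℝ) (hc0 : 0 < c) (hc1 : c < 1)
    (x : ℕ → X) (hnorm : ∀ n, ‖x n‖ = 1)
    (hlow : ∀ k : ℕ, 1 ≤ k → ∀ a : Fin k → ℝ, ∀ n : Fin k → ℕ,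
      StrictMono n → (∀ i, k ≤ n i) →
      ‖∑ i, a i • x (n i)‖ ≥ c * ∑ i, |a i|) :
    ∀ N : ℕ, 1 ≤ N → ∃ f : {l : List ℕ // l.length ≤ N} → X,
      ∀ s t : {l : List ℕ // l.length ≤ N},
        c * (treeDist s.1 t.1 : ℝ) ≤ ‖f s - f t‖ ∧
        ‖f s - f t‖ ≤ (treeDist s.1 t.1 : ℝ) :=
  stmt_3_general c x hnorm hlow
end

section
/- Let p ∈ (1, ∞) and let ρ be an Orlicz function with ρ(t) ≤ c·t^p for all t ∈ [0, 1] and ρ(t) ≤ c·t for all t ≥ 1, for some constant c > 0. Define norms N_k^ρ on ℝ^k inductively by N_1^ρ(x) = |x|, N_2^ρ(x,y) = |x|(1 + ρ(|y|/|x|)) for x ≠ 0, N_2^ρ(0,y) = |y|, and N_k^ρ(x_1, …, x_k) = N_2^ρ(N_{k-1}^ρ(x_1, …, x_{k-1}), x_k) for k ≥ 3. Then there exists a constant A > 0 depending only on c and p such that for every k ≥ 1 and every v ∈ ℝ^k, N_k^ρ(v) ≤ A ‖v‖_{ℓ_p^k}. -/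
/-- `N₂^ρ(x,y) = |x|(1 + ρ(|y|/|x|))` for `x ≠ 0`, `N₂^ρ(0,y) = |y|`. -/
noncomputable def N2 (ρ : ℝ → ℝ) (x y : ℝ) : ℝ :=
  if x = 0 then |y| else |x| * (1 + ρ (|y| / |x|))

/-- Iterated norms: `Nk ρ k v` is `N_{k+1}^ρ(v₀,…,v_k)`, so `Nk ρ 0 v = |v 0|` and
`Nk ρ (k+1) v = N₂^ρ(Nk ρ k (v ∘ castSucc), v (last))`. -/
noncomputable def Nk (ρ : ℝ → ℝ) : (k : ℕ) → (Fin (k + 1) → ℝ) → ℝ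
  | 0, v => |v 0|
  | k + 1, v => N2 ρ (Nk ρ k (fun i => v i.castSucc)) (v (Fin.last (k + 1)))

/-! For `x > 0` we have `N₂^ρ(x, y) = x (1 + ρ(t))` with `t = |y|/x`, and the growth bounds on `ρ`
give `(1 + ρ(t))^p ≤ 1 + (1 + c)^p t^p`: for `t ≤ 1` by convexity of `s ↦ s^p` between `1` and
`1 + c`, for `t ≥ 1` because `1 + ρ(t) ≤ (1 + c) t`. Hence
`N₂^ρ(x, y)^p ≤ x^p + (1 + c)^p |y|^p`, and iterating this along the recursive definition of
`N_k^ρ` yields `(N_k^ρ v)^p ≤ (1 + c)^p ‖v‖_p^p`, i.e. the claim with `A = 1 + c`. -/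

lemma one_add_mul_rpow_le {p c u : ℝ} (hp : 1 ≤ p) (hc : 0 ≤ c) (hu₀ : 0 ≤ u) (hu₁ : u ≤ 1) :
    (1 + c * u) ^ p ≤ 1 + (1 + c) ^ p * u := by
  have hconv := (convexOn_rpow hp).2 (Set.mem_Ici.mpr zero_le_one)
    (Set.mem_Ici.mpr (by linarith : (0 : ℝ) ≤ 1 + c)) (sub_nonneg.mpr hu₁) hu₀ (by ring)
  simp only [smul_eq_mul, Real.one_rpow] at hconv
  calc (1 + c * u) ^ p = ((1 - u) * 1 + u * (1 + c)) ^ p := by ring_nf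
    _ ≤ (1 - u) * 1 + u * (1 + c) ^ p := hconv
    _ ≤ 1 + (1 + c) ^ p * u := by nlinarith

section Orlicz

variable {ρ : ℝ → ℝ} {p c : ℝ}

lemma one_add_rpow_le_of_growth (hp : 1 ≤ p) (hc : 0 ≤ c) (hρ : ∀ t, 0 ≤ t → 0 ≤ ρ t)
    (hle1 : ∀ t ∈ Set.Icc (0 : ℝ) 1, ρ t ≤ c * t ^ p) (hge1 : ∀ t ≥ (1 : ℝ), ρ t ≤ c * t)
    {t : ℝ} (ht : 0 ≤ t) :
    (1 + ρ t) ^ p ≤ 1 + (1 + c) ^ p * t ^ p := by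
  have hp₀ : 0 < p := zero_lt_one.trans_le hp
  have hρt := hρ t ht
  rcases le_or_gt t 1 with ht₁ | ht₁
  · calc (1 + ρ t) ^ p ≤ (1 + c * t ^ p) ^ p := by
          gcongr
          exact hle1 t ⟨ht, ht₁⟩
      _ ≤ 1 + (1 + c) ^ p * t ^ p :=
          one_add_mul_rpow_le hp hc (by positivity) (Real.rpow_le_one ht ht₁ hp₀.le)
  · calc (1 + ρ t) ^ p ≤ ((1 + c) * t) ^ p := by
          gcongr
          nlinarith [hge1 t ht₁.le]
      _ = (1 + c) ^ p * t ^ p := Real.mul_rpow (by linarith) ht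
      _ ≤ 1 + (1 + c) ^ p * t ^ p := le_add_of_nonneg_left zero_le_one

lemma N2_nonneg (hρ : ∀ t, 0 ≤ t → 0 ≤ ρ t) (x y : ℝ) : 0 ≤ N2 ρ x y := by
  unfold N2
  split_ifs
  · exact abs_nonneg y
  · have := hρ (|y| / |x|) (by positivity)
    positivity

lemma Nk_nonneg (hρ : ∀ t, 0 ≤ t → 0 ≤ ρ t) : ∀ (k : ℕ) (v : Fin (k + 1) → ℝ), 0 ≤ Nk ρ k v
  | 0, v => abs_nonneg (v 0)
  | _ + 1, _ => N2_nonneg hρ _ _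

lemma N2_rpow_le (hp : 1 ≤ p) (hc : 0 ≤ c) (hρ : ∀ t, 0 ≤ t → 0 ≤ ρ t)
    (hle1 : ∀ t ∈ Set.Icc (0 : ℝ) 1, ρ t ≤ c * t ^ p) (hge1 : ∀ t ≥ (1 : ℝ), ρ t ≤ c * t)
    {x : ℝ} (hx : 0 ≤ x) (y : ℝ) :
    N2 ρ x y ^ p ≤ x ^ p + (1 + c) ^ p * |y| ^ p := by
  have hp₀ : 0 < p := zero_lt_one.trans_le hp
  rcases hx.eq_or_lt with rfl | hx
  · have : 1 ≤ (1 + c) ^ p := Real.one_le_rpow (by linarith) hp₀.le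
    simp only [N2, if_pos, Real.zero_rpow hp₀.ne', zero_add]
    nlinarith [Real.rpow_nonneg (abs_nonneg y) p]
  · have ht : 0 ≤ |y| / x := by positivity
    have hρt := hρ _ ht
    calc N2 ρ x y ^ p = x ^ p * (1 + ρ (|y| / x)) ^ p := by
          rw [N2, if_neg hx.ne', abs_of_pos hx, Real.mul_rpow hx.le (by linarith)]
      _ ≤ x ^ p * (1 + (1 + c) ^ p * (|y| / x) ^ p) := by
          gcongr
          exact one_add_rpow_le_of_growth hp hc hρ hle1 hge1 ht
      _ = x ^ p + (1 + c) ^ p * (x * (|y| / x)) ^ p := by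
          rw [Real.mul_rpow hx.le ht]
          ring
      _ = x ^ p + (1 + c) ^ p * |y| ^ p := by rw [mul_div_cancel₀ _ hx.ne']

end Orlicz

lemma Nk_rpow_le_mul_sum {ρ : ℝ → ℝ} {p B : ℝ} (hB : 1 ≤ B) (hρ : ∀ t, 0 ≤ t → 0 ≤ ρ t)
    (hN2 : ∀ x, 0 ≤ x → ∀ y, N2 ρ x y ^ p ≤ x ^ p + B * |y| ^ p) :
    ∀ (k : ℕ) (v : Fin (k + 1) → ℝ), Nk ρ k v ^ p ≤ B * ∑ i, |v i| ^ p
  | 0, v => by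
    rw [Nk, Fin.sum_univ_one]
    nlinarith [Real.rpow_nonneg (abs_nonneg (v 0)) p]
  | k + 1, v => by
    rw [Fin.sum_univ_castSucc, mul_add]
    calc Nk ρ (k + 1) v ^ p
        ≤ Nk ρ k (fun i => v i.castSucc) ^ p + B * |v (Fin.last (k + 1))| ^ p :=
          hN2 _ (Nk_nonneg hρ k _) _
      _ ≤ B * ∑ i : Fin (k + 1), |v i.castSucc| ^ p + B * |v (Fin.last (k + 1))| ^ p := by
          gcongr
          exact Nk_rpow_le_mul_sum hB hρ hN2 k _

lemma le_mul_rpow_one_div_of_rpow_le {a b S p : ℝ} (hp : 0 < p) (ha : 0 ≤ a) (hb : 0 ≤ b)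
    (hS : 0 ≤ S) (h : a ^ p ≤ b ^ p * S) : a ≤ b * S ^ (1 / p) := by
  rwa [one_div, ← Real.rpow_rpow_inv hb hp.ne', ← Real.mul_rpow (by positivity) hS,
    Real.le_rpow_inv_iff_of_pos ha (by positivity) hp]

/-- Kalton's upper `ℓ_p` estimate: if `ρ` is an Orlicz function with `ρ(t) ≤ c·t^p` on
`[0,1]` and `ρ(t) ≤ c·t` for `t ≥ 1`, then `N_k^ρ(v) ≤ A‖v‖_{ℓ_p^k}` for a constant
`A > 0` depending only on `c` and `p`. -/
theorem stmt_13 (p : ℝ) (hp : 1 < p) (c : ℝ) (hc : 0 < c) :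
    ∃ A : ℝ, 0 < A ∧ ∀ ρ : ℝ → ℝ,
      ConvexOn ℝ (Set.Ici 0) ρ → MonotoneOn ρ (Set.Ici 0) →
      ContinuousOn ρ (Set.Ici 0) → ρ 0 = 0 → (∀ t > (0 : ℝ), 0 < ρ t) →
      (∀ t ∈ Set.Icc (0 : ℝ) 1, ρ t ≤ c * t ^ p) →
      (∀ t ≥ (1 : ℝ), ρ t ≤ c * t) →
      ∀ k : ℕ, ∀ v : Fin (k + 1) → ℝ,
        Nk ρ k v ≤ A * (∑ i, |v i| ^ p) ^ (1 / p) := by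
  refine ⟨1 + c, by linarith, fun ρ _ hmono _ h0 _ hle1 hge1 k v => ?_⟩
  have hρ : ∀ t, 0 ≤ t → 0 ≤ ρ t := fun t ht =>
    h0 ▸ hmono Set.self_mem_Ici ht ht
  have hB : 1 ≤ (1 + c) ^ p := Real.one_le_rpow (by linarith) (by linarith)
  exact le_mul_rpow_one_div_of_rpow_le (by linarith) (Nk_nonneg hρ k v) (by linarith)
    (Finset.sum_nonneg fun i _ => by positivity)
    (Nk_rpow_le_mul_sum hB hρ (fun x hx => N2_rpow_le hp.le hc.le hρ hle1 hge1 hx) k v)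
end

section
/- Let Y be a normed space, x ∈ Y with ‖x‖ = 1, M > 0, and let g : [0, M] → ℝ be uniformly continuous and nondecreasing. Let F be a filter on Y. Suppose: for every σ ∈ [0, M] and every ε > 0, there is a set V ∈ F such that for all y ∈ V with ‖y‖ ≥ σ, ‖x + y‖ ≥ 1 + g(σ) - ε. Then for every ε > 0 there is a set V ∈ F such that for all y ∈ V with ‖y‖ ≤ M, ‖x + y‖ ≥ 1 + g(‖y‖) - ε. -/
/-- Uniformization of an asymptotic convexity estimate along a filter: if for each
`σ ∈ [0,M]` and `ε > 0` there is `V ∈ F` with `‖x + y‖ ≥ 1 + g(σ) - ε` whenever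
`y ∈ V` and `‖y‖ ≥ σ`, then for each `ε > 0` there is `V ∈ F` with
`‖x + y‖ ≥ 1 + g(‖y‖) - ε` whenever `y ∈ V` and `‖y‖ ≤ M`. -/
theorem stmt_18 {Y : Type*} [NormedAddCommGroup Y] [NormedSpace ℝ Y]
    (x : Y) (hx : ‖x‖ = 1) (M : ℝ) (hM : 0 < M)
    (g : ℝ → ℝ) (hg : UniformContinuousOn g (Set.Icc 0 M))
    (hgm : MonotoneOn g (Set.Icc 0 M))
    (F : Filter Y)
    (h : ∀ σ ∈ Set.Icc (0 : ℝ) M, ∀ ε > (0 : ℝ), ∃ V ∈ F,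
      ∀ y ∈ V, σ ≤ ‖y‖ → 1 + g σ - ε ≤ ‖x + y‖) :
    ∀ ε > (0 : ℝ), ∃ V ∈ F, ∀ y ∈ V, ‖y‖ ≤ M → 1 + g ‖y‖ - ε ≤ ‖x + y‖ := by
  intro ε hε
  obtain ⟨δ, hδ, hδ'⟩ := Metric.uniformContinuousOn_iff.1 hg (ε/2) (by linarith)
  set η := δ/2 with hηdef
  have hη0 : 0 < η := by positivity
  set N := Nat.floor (M/η) with hN
  have hch : ∀ i : Fin (N+1), ∃ V ∈ F, ∀ y ∈ V,
      (i : ℝ) * η ≤ ‖y‖ → 1 + g ((i : ℝ) * η) - ε/2 ≤ ‖x + y‖ := by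
    intro i
    refine h ((i : ℝ) * η) ⟨by positivity, ?_⟩ (ε/2) (by linarith)
    calc (i : ℝ) * η ≤ (N : ℝ) * η := by
          gcongr
          exact_mod_cast Nat.lt_succ_iff.1 i.isLt
      _ ≤ (M/η) * η := by gcongr; exact Nat.floor_le (by positivity)
      _ = M := by field_simp
  choose V hVF hV using hch
  refine ⟨⋂ i, V i, Filter.iInter_mem.2 hVF, ?_⟩
  intro y hy hyM
  have hy0 : 0 ≤ ‖y‖ := norm_nonneg y
  set i₀ := Nat.floor (‖y‖/η) with hi0
  have hi₀N : i₀ ≤ N := Nat.floor_mono (by gcongr)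
  have hilt : i₀ < N + 1 := Nat.lt_succ_of_le hi₀N
  set σ := (i₀ : ℝ) * η with hσ
  have hσle : σ ≤ ‖y‖ := by
    have := Nat.floor_le (show 0 ≤ ‖y‖/η by positivity)
    calc σ ≤ (‖y‖/η) * η := by rw [hσ]; gcongr
      _ = ‖y‖ := by field_simp
  have hlt : ‖y‖ < σ + η := by
    have := Nat.lt_floor_add_one (‖y‖/η)
    calc ‖y‖ = (‖y‖/η) * η := by field_simp
      _ < ((i₀ : ℝ) + 1) * η := by gcongr
      _ = σ + η := by rw [hσ]; ring
  have hσmem : σ ∈ Set.Icc (0 : ℝ) M := ⟨by positivity, le_trans hσle hyM⟩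
  have hymem : ‖y‖ ∈ Set.Icc (0 : ℝ) M := ⟨hy0, hyM⟩
  have hdist : dist σ ‖y‖ < δ := by
    rw [Real.dist_eq, abs_of_nonpos (by linarith)]
    linarith
  have hgd := hδ' σ hσmem ‖y‖ hymem hdist
  rw [Real.dist_eq] at hgd
  have hgty : g ‖y‖ - g σ < ε/2 := by
    have := abs_lt.1 hgd; linarith [this.2]
  have hmain : 1 + g σ - ε/2 ≤ ‖x + y‖ := by
    have := hV ⟨i₀, hilt⟩ y (Set.mem_iInter.1 hy ⟨i₀, hilt⟩)
    simpa using this hσle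
  linarith
end
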